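/- arXiv:2007.03664 — 2 statements merged into one kernel-verified Lean document; each statement's English description precedes it below -/
import Mathlib

section
/- For every integer n ≥ 0, the coefficient c(B⁽²⁾;n) is odd if and only if n = 2k² + 2k for some integer k ≥ 0. Moreover, for every N ∈ ℕ, #{0 ≤ n ≤ N : c(B⁽²⁾;n) is odd} = ⌊(√(2N+1) + 1)/2⌋. -/
open PowerSeries Finset
open scoped Classical

noncomputable section

/-- The generalized q-Pochhammer symbol `(a;b)_n = ∏_{j=0}^{n-1} (1 - a·bʲ)`
in the ring `ℤ⟦q⟧` of formal power series (here the variable `q` is `PowerSeries.X`). -/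
def qPoch (a b : PowerSeries ℤ) (n : ℕ) : PowerSeries ℤ :=
  ∏ j ∈ Finset.range n, (1 - a * b ^ j)

/-- Division of formal power series; this is genuine division whenever the denominator
has constant coefficient `1`. -/
def psDiv (f g : PowerSeries ℤ) : PowerSeries ℤ :=
  f * PowerSeries.invOfUnit g 1

/-- The coefficientwise sum of a family of formal power series. -/
def psSum (f : ℕ → PowerSeries ℤ) : PowerSeries ℤ :=
  PowerSeries.mk fun n => ∑' k, PowerSeries.coeff n (f k)

/-- The second order mock theta function
`B⁽²⁾(q) = ∑_{n≥0} qⁿ·(−q;q²)_n / (q;q²)_{n+1}`. -/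
def mockB2 : PowerSeries ℤ :=
  psSum fun n => psDiv (X ^ n * qPoch (-X) (X ^ 2) n) (qPoch X (X ^ 2) (n + 1))

/-!
Modulo 2 the factors `(-q;q²)_n` and `(q;q²)_n` agree, so the `n`-th summand of `B⁽²⁾` reduces to
`qⁿ / (1 - q^(2n+1))`. Its coefficient of `q^N` is odd exactly when `2n+1 ∣ N - n`, i.e. when
`2n+1 ∣ 2N+1`; hence `c(B⁽²⁾;N)` has the parity of the number of divisors of `2N+1`, which is odd
exactly when `2N+1 = (2k+1)²`. For the count, `2k² + 2k ≤ N` iff `2k+1 ≤ ⌊√(2N+1)⌋`.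
-/

namespace Nat

theorem isSquare_iff_forall_even_factorization {m : ℕ} (hm : m ≠ 0) :
    IsSquare m ↔ ∀ p, Even (m.factorization p) := by
  constructor
  · rintro ⟨r, rfl⟩ p
    have hr : r ≠ 0 := by rintro rfl; simp at hm
    rw [factorization_mul hr hr, Finsupp.add_apply]
    exact ⟨_, rfl⟩
  · intro h
    refine ⟨m.factorization.prod fun p k => p ^ (k / 2), ?_⟩
    conv_lhs => rw [← prod_factorization_pow_eq_self hm]
    rw [← Finsupp.prod_mul]
    refine Finsupp.prod_congr fun p _ => ?_
    rw [← pow_add, ← two_mul, two_mul_div_two_of_even (h p)]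

theorem odd_card_divisors_iff_isSquare {m : ℕ} (hm : m ≠ 0) :
    Odd #m.divisors ↔ IsSquare m := by
  rw [card_divisors hm, isSquare_iff_forall_even_factorization hm, ← not_even_iff_odd,
    even_iff_two_dvd, prime_two.prime.dvd_finsetProd_iff]
  push Not
  refine ⟨fun h p => ?_, fun h p _ => ?_⟩
  · by_cases hp : p ∈ m.primeFactors
    · simpa [← even_iff_two_dvd, even_add_one] using h p hp
    · simp [Finsupp.notMem_support_iff.mp (by rwa [support_factorization])]
  · rw [← even_iff_two_dvd, even_add_one]
    exact not_not_intro (h p)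

theorem floor_sqrt_add_one_div_two (a : ℕ) :
    ⌊(√(a : ℝ) + 1) / 2⌋₊ = (sqrt a + 1) / 2 := by
  rw [Nat.floor_div_ofNat, Nat.floor_add_one (Real.sqrt_nonneg _),
    Real.nat_floor_real_sqrt_eq_nat_sqrt]

end Nat

theorem isSquare_two_mul_add_one_iff (N : ℕ) :
    IsSquare (2 * N + 1) ↔ ∃ k : ℕ, N = 2 * k ^ 2 + 2 * k := by
  constructor
  · rintro ⟨r, hr⟩
    obtain ⟨k, rfl⟩ : Odd r := (Nat.odd_mul.mp (hr ▸ odd_two_mul_add_one N)).1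
    exact ⟨k, by nlinarith⟩
  · rintro ⟨k, rfl⟩
    exact ⟨2 * k + 1, by ring⟩

theorem two_mul_add_one_dvd_sub_iff {n N : ℕ} (h : n ≤ N) :
    2 * n + 1 ∣ N - n ↔ 2 * n + 1 ∣ 2 * N + 1 := by
  have hcop : Nat.Coprime (2 * n + 1) 2 := by simp
  rw [show 2 * N + 1 = 2 * (N - n) + (2 * n + 1) by omega, Nat.dvd_add_self_right,
    hcop.dvd_mul_left]

theorem card_filter_two_mul_add_one_dvd (N : ℕ) :
    #{n ∈ range (N + 1) | 2 * n + 1 ∣ 2 * N + 1} = #(2 * N + 1).divisors := by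
  refine card_nbij (fun n => 2 * n + 1) (fun n hn => ?_) (fun a _ b _ hab => by simpa using hab)
    (fun d hd => ?_)
  · simp only [coe_filter, mem_range, Set.mem_ofPred_eq] at hn
    simp [hn.2]
  · simp only [mem_coe, Nat.mem_divisors] at hd
    obtain ⟨hdvd, -⟩ := hd
    obtain ⟨k, rfl⟩ := (odd_two_mul_add_one N).of_dvd_nat hdvd
    have := Nat.le_of_dvd (by omega) hdvd
    exact ⟨k, mem_filter.mpr ⟨mem_range.mpr (by omega), hdvd⟩, rfl⟩

theorem two_mul_sq_add_two_mul_le_iff (k N : ℕ) :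
    2 * k ^ 2 + 2 * k ≤ N ↔ k < (Nat.sqrt (2 * N + 1) + 1) / 2 := by
  rw [show k < (Nat.sqrt (2 * N + 1) + 1) / 2 ↔ 2 * k + 1 ≤ Nat.sqrt (2 * N + 1) by omega,
    Nat.le_sqrt]
  constructor <;> intro h <;> nlinarith

theorem card_filter_exists_eq_two_mul_sq_add_two_mul (N : ℕ) :
    #{n ∈ range (N + 1) | ∃ k : ℕ, n = 2 * k ^ 2 + 2 * k} = (Nat.sqrt (2 * N + 1) + 1) / 2 := by
  have hmono : StrictMono fun k : ℕ => 2 * k ^ 2 + 2 * k :=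
    strictMono_nat_of_lt_succ fun k => by nlinarith
  have himage : {n ∈ range (N + 1) | ∃ k : ℕ, n = 2 * k ^ 2 + 2 * k}
      = (range ((Nat.sqrt (2 * N + 1) + 1) / 2)).image fun k => 2 * k ^ 2 + 2 * k := by
    ext n
    simp only [mem_filter, mem_range, mem_image, Nat.lt_succ_iff, ← two_mul_sq_add_two_mul_le_iff]
    constructor
    · rintro ⟨hn, k, rfl⟩
      exact ⟨k, hn, rfl⟩
    · rintro ⟨k, hk, rfl⟩
      exact ⟨hk, k, rfl⟩
  rw [himage, card_image_of_injective _ hmono.injective, card_range]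

def mockB2Term (n : ℕ) : PowerSeries ℤ :=
  psDiv (X ^ n * qPoch (-X) (X ^ 2) n) (qPoch X (X ^ 2) (n + 1))

theorem mockB2_eq_psSum : mockB2 = psSum mockB2Term := rfl

local notation "reduceModTwo" => PowerSeries.map (Int.castRingHom (ZMod 2))

theorem qPoch_succ (a b : PowerSeries ℤ) (n : ℕ) :
    qPoch a b (n + 1) = qPoch a b n * (1 - a * b ^ n) :=
  prod_range_succ _ n

theorem constantCoeff_qPoch {a : PowerSeries ℤ} (ha : constantCoeff a = 0) (b : PowerSeries ℤ)
    (n : ℕ) : constantCoeff (qPoch a b n) = 1 := by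
  simp [qPoch, ha]

theorem map_qPoch {R : Type*} [CommRing R] (f : ℤ →+* R) (a b : PowerSeries ℤ) (n : ℕ) :
    map f (qPoch a b n) = ∏ j ∈ range n, (1 - map f a * map f b ^ j) := by
  simp [qPoch]

theorem psDiv_mul_cancel (f : PowerSeries ℤ) {g : PowerSeries ℤ} (hg : constantCoeff g = 1) :
    psDiv f g * g = f := by
  rw [psDiv, mul_assoc, invOfUnit_mul g 1 (by simpa using hg), mul_one]

theorem coeff_psSum_eq_sum_range {f : ℕ → PowerSeries ℤ} {N : ℕ}
    (hf : ∀ k, N < k → coeff N (f k) = 0) :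
    coeff N (psSum f) = ∑ k ∈ range (N + 1), coeff N (f k) := by
  rw [psSum, coeff_mk]
  exact tsum_eq_sum fun k hk => hf k (by simpa using hk)

theorem PowerSeries.one_sub_X_pow_mul_expand_mk_one {R : Type*} [CommRing R] {d : ℕ}
    (hd : d ≠ 0) : (1 - X ^ d) * expand d hd (mk 1 : PowerSeries R) = 1 := by
  rw [mul_comm, ← expand_X d hd, ← map_one (expand d hd), ← map_sub, ← map_mul,
    mk_one_mul_one_sub_eq_one, map_one]

theorem reduceModTwo_qPoch_neg (a b : PowerSeries ℤ) (n : ℕ) :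
    reduceModTwo (qPoch (-a) b n) = reduceModTwo (qPoch a b n) := by
  have hneg : reduceModTwo (-a) = reduceModTwo a := by
    ext; simp [ZMod.neg_eq_self_mod_two]
  rw [map_qPoch, map_qPoch, hneg]

theorem reduceModTwo_mockB2Term (n : ℕ) :
    reduceModTwo (mockB2Term n) = X ^ n * expand (2 * n + 1) (by omega) (mk 1) := by
  have hconst := constantCoeff_qPoch constantCoeff_X (X ^ 2) (n + 1)
  have hunit : IsUnit (reduceModTwo (qPoch X (X ^ 2) (n + 1))) :=
    (isUnit_iff_constantCoeff.mpr (by rw [hconst]; exact isUnit_one)).map _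
  refine hunit.mul_left_inj.mp ?_
  rw [← map_mul, mockB2Term, psDiv_mul_cancel _ hconst, map_mul, reduceModTwo_qPoch_neg,
    qPoch_succ]
  simp only [map_mul, map_sub, map_one, map_pow, map_X]
  rw [← pow_mul, ← pow_succ']
  linear_combination (-X ^ n * reduceModTwo (qPoch X (X ^ 2) n)) *
    one_sub_X_pow_mul_expand_mk_one (R := ZMod 2) (d := 2 * n + 1) (by omega)

theorem coeff_reduceModTwo_mockB2Term {n N : ℕ} (h : n ≤ N) :
    coeff N (reduceModTwo (mockB2Term n)) = if 2 * n + 1 ∣ 2 * N + 1 then 1 else 0 := by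
  rw [reduceModTwo_mockB2Term, coeff_X_pow_mul', if_pos h, coeff_expand]
  simp [two_mul_add_one_dvd_sub_iff h]

theorem coeff_mockB2Term_of_lt {n N : ℕ} (h : N < n) : coeff N (mockB2Term n) = 0 := by
  rw [mockB2Term, psDiv, mul_assoc, coeff_X_pow_mul', if_neg (by omega)]

theorem intCast_coeff_mockB2 (N : ℕ) :
    ((coeff N mockB2 : ℤ) : ZMod 2) = #(2 * N + 1).divisors := by
  rw [mockB2_eq_psSum, coeff_psSum_eq_sum_range fun k hk => coeff_mockB2Term_of_lt hk,
    Int.cast_sum]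
  have hterm : ∀ n ∈ range (N + 1), ((coeff N (mockB2Term n) : ℤ) : ZMod 2)
      = if 2 * n + 1 ∣ 2 * N + 1 then 1 else 0 := fun n hn => by
    rw [← coeff_reduceModTwo_mockB2Term (Nat.lt_succ_iff.mp (mem_range.mp hn)), coeff_map]
    rfl
  rw [sum_congr rfl hterm, sum_boole, card_filter_two_mul_add_one_dvd]

theorem odd_coeff_mockB2_iff (N : ℕ) :
    Odd (coeff N mockB2) ↔ ∃ k : ℕ, N = 2 * k ^ 2 + 2 * k := by
  rw [← ZMod.intCast_eq_one_iff_odd, intCast_coeff_mockB2, ZMod.natCast_eq_one_iff_odd,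
    Nat.odd_card_divisors_iff_isSquare (by omega), isSquare_two_mul_add_one_iff]

/-- `c(B⁽²⁾;n)` is odd iff `n = 2k² + 2k` for some `k ≥ 0`; moreover
`#{0 ≤ n ≤ N : c(B⁽²⁾;n) odd} = ⌊(√(2N+1) + 1)/2⌋`. -/
theorem mockB2_parity :
    (∀ n : ℕ, Odd (PowerSeries.coeff n mockB2) ↔ ∃ k : ℕ, n = 2 * k ^ 2 + 2 * k) ∧
    (∀ N : ℕ, ((Finset.range (N + 1)).filter
        (fun n => Odd (PowerSeries.coeff n mockB2))).card =
      ⌊(Real.sqrt (2 * N + 1) + 1) / 2⌋₊) := by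
  refine ⟨odd_coeff_mockB2_iff, fun N => ?_⟩
  rw [show (2 * N + 1 : ℝ) = ((2 * N + 1 : ℕ) : ℝ) by push_cast; rfl,
    Nat.floor_sqrt_add_one_div_two, ← card_filter_exists_eq_two_mul_sq_add_two_mul]
  exact congrArg card (filter_congr fun n _ => odd_coeff_mockB2_iff n)
end
end

section
/- For every integer n ≥ 0, the coefficient c(ν⁽³⁾;n) is odd if and only if 3n + 1 = k² for some integer k. Moreover, for every N ∈ ℕ, #{0 ≤ n ≤ N : c(ν⁽³⁾;n) is odd} = ⌊√(3N+1)⌋ − ⌊√(3N+1)/3⌋. -/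
open PowerSeries Finset
open scoped Classical

noncomputable section

/-- The third order mock theta function `ν⁽³⁾(q) = ∑_{n≥0} q^{n(n+1)} / (−q;q²)_{n+1}`. -/
def mockNu3 : PowerSeries ℤ :=
  psSum fun n => psDiv (X ^ (n * (n + 1))) (qPoch (-X) (X ^ 2) (n + 1))

/-!
Reduce modulo 2. The tails `h_k = ∑_n q^{n²+(2k+1)n} / ∏_{j≤n} (1 + q^{2j+2k+1})`, with `h_0 = ν⁽³⁾`,
satisfy `(1 + q^{2k+1}) h_k = 1 + q^{2k+2} h_{k+1}` termwise, and this recursion determines `h_0`: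
the difference `d` of two solutions has `q d_{k+1} ∣ d_k`, so `q^k ∣ d_0` for every `k`.
Over `𝔽₂` an explicit solution is `g_k = E_k + q^{k(2k+1)} P_k (θ_{6k+2} + q^{2k+1} θ_{6k+4})`, where
`P_k = ∏_{j<k} (1 + q^{2j+1})`, `E_k = ∑_{n<k} q^{(2k+1)n} P_n` and `θ_c = ∑_m q^{3m²+cm}`.
Hence `ν⁽³⁾ ≡ θ_2 + q θ_4 = ∑_{j ≥ 1, 3 ∤ j} q^{(j²-1)/3} (mod 2)`, and the count follows from the
bijection `n ↦ √(3n+1)` onto `{1 ≤ j ≤ √(3N+1) : 3 ∤ j}`.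
-/

theorem Nat.mul_self_mod_three_eq_one {m : ℕ} (hm : ¬ 3 ∣ m) : m * m % 3 = 1 := by
  have : m % 3 = 1 ∨ m % 3 = 2 := by omega
  rcases this with h | h <;> simp [Nat.mul_mod, h]

theorem Nat.isSquare_three_mul_add_one_iff (N : ℕ) :
    IsSquare (3 * N + 1) ↔ (∃ m, N = 3 * m * m + 2 * m) ∨ ∃ m, N = 3 * m * m + 4 * m + 1 := by
  constructor
  · rintro ⟨r, hr⟩
    obtain ⟨t, rfl | rfl | rfl⟩ : ∃ t, r = 3 * t ∨ r = 3 * t + 1 ∨ r = 3 * t + 2 :=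
      ⟨r / 3, by omega⟩
    · ring_nf at hr
      omega
    · exact .inl ⟨t, by ring_nf at hr ⊢; omega⟩
    · exact .inr ⟨t, by ring_nf at hr ⊢; omega⟩
  · rintro (⟨m, rfl⟩ | ⟨m, rfl⟩)
    · exact ⟨3 * m + 1, by ring⟩
    · exact ⟨3 * m + 2, by ring⟩

theorem Nat.not_exists_three_mul_mul_add_two_mul_and (N : ℕ) :
    ¬ ((∃ m, N = 3 * m * m + 2 * m) ∧ ∃ m, N = 3 * m * m + 4 * m + 1) := by
  rintro ⟨⟨m, hm⟩, ⟨m', hm'⟩⟩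
  have h : (3 * m + 1) * (3 * m + 1) = (3 * m' + 2) * (3 * m' + 2) :=
    calc (3 * m + 1) * (3 * m + 1) = 3 * N + 1 := by rw [hm]; ring
      _ = (3 * m' + 2) * (3 * m' + 2) := by rw [hm']; ring
  have := Nat.mul_self_inj.mp h
  omega

theorem Nat.exists_eq_three_mul_mul_add_mul_iff (c N : ℕ) :
    (∃ m, N = 3 * m * m + c * m) ↔
      N = 0 ∨ c + 3 ≤ N ∧ ∃ m, N - (c + 3) = 3 * m * m + (c + 6) * m := by
  have hshift (m : ℕ) :
      3 * (m + 1) * (m + 1) + c * (m + 1) = 3 * m * m + (c + 6) * m + (c + 3) := by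
    ring
  constructor
  · rintro ⟨_ | m, rfl⟩
    · simp
    · exact .inr ⟨by rw [hshift]; omega, m, by rw [hshift]; omega⟩
  · rintro (rfl | ⟨hle, m, hm⟩)
    · exact ⟨0, by simp⟩
    · exact ⟨m + 1, by rw [hshift]; omega⟩

namespace PowerSeries

variable {R : Type*}

theorem eq_zero_of_forall_X_mul_dvd [CommSemiring R] {d : ℕ → R⟦X⟧}
    (h : ∀ k, X * d (k + 1) ∣ d k) : d 0 = 0 := by
  have hdvd (k : ℕ) : X ^ k * d k ∣ d 0 := by
    induction k with
    | zero => simp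
    | succ k ih =>
      rw [pow_succ, mul_assoc]
      exact (mul_dvd_mul_left _ (h k)).trans ih
  ext m
  exact X_pow_dvd_iff.mp (dvd_of_mul_right_dvd (hdvd (m + 1))) m (Nat.lt_succ_self m)

theorem constantCoeff_one_add_X_pow [Semiring R] {m : ℕ} (hm : m ≠ 0) :
    constantCoeff (1 + X ^ m : R⟦X⟧) = 1 := by
  simp [hm]

theorem mul_invOfUnit_mul_left [CommRing R] {a b : R⟦X⟧} (ha : constantCoeff a = 1)
    (hb : constantCoeff b = 1) : a * invOfUnit (a * b) 1 = invOfUnit b 1 := by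
  have hab : constantCoeff (a * b) = ↑(1 : Rˣ) := by simp [ha, hb]
  calc a * invOfUnit (a * b) 1
      = invOfUnit b 1 * b * (a * invOfUnit (a * b) 1) := by
        rw [invOfUnit_mul b 1 (by simpa using hb), one_mul]
    _ = invOfUnit b 1 * ((a * b) * invOfUnit (a * b) 1) := by ring
    _ = invOfUnit b 1 := by rw [mul_invOfUnit _ _ hab, mul_one]

section NuRecursion

variable [CommRing R]

def IsNuRecursion (a : ℕ → R⟦X⟧) : Prop :=
  ∀ k, (1 + X ^ (2 * k + 1)) * a k = 1 + X ^ (2 * k + 2) * a (k + 1)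

theorem IsNuRecursion.map {S : Type*} [CommRing S] (f : R →+* S) {a : ℕ → R⟦X⟧}
    (ha : IsNuRecursion a) : IsNuRecursion fun k ↦ map f (a k) := by
  intro k
  simpa using congr(PowerSeries.map f $(ha k))

theorem IsNuRecursion.head_eq {a b : ℕ → R⟦X⟧} (ha : IsNuRecursion a) (hb : IsNuRecursion b) :
    a 0 = b 0 := by
  rw [← sub_eq_zero]
  refine eq_zero_of_forall_X_mul_dvd (d := fun k ↦ a k - b k) fun k ↦ ?_
  have hd : (1 + X ^ (2 * k + 1)) * (a k - b k) =
      X ^ (2 * k + 1) * (X * (a (k + 1) - b (k + 1))) := by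
    linear_combination ha k - hb k
  have hunit : IsUnit (1 + X ^ (2 * k + 1) : R⟦X⟧) := isUnit_iff_constantCoeff.mpr (by simp)
  rw [← hunit.dvd_mul_left, hd]
  exact dvd_mul_left _ _

end NuRecursion

open WithPiTopology in
theorem summable_of_forall_X_pow_dvd [Semiring R] [TopologicalSpace R] {f : ℕ → R⟦X⟧}
    (hf : ∀ n, X ^ n ∣ f n) : Summable f := by
  rw [summable_iff_summable_coeff]
  refine fun d ↦ summable_of_hasFiniteSupport <| (Set.finite_Iic d).subset fun n hn ↦ ?_
  by_contra! hdn
  exact hn (X_pow_dvd_iff.mp (hf n) d (by simpa using hdn))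

section NuTail

variable [CommRing R]

def nuDenom (k n : ℕ) : R⟦X⟧ := ∏ j ∈ range (n + 1), (1 + X ^ (2 * j + 2 * k + 1))

def nuTerm (k n : ℕ) : R⟦X⟧ := X ^ (n * n + (2 * k + 1) * n) * invOfUnit (nuDenom k n) 1

theorem constantCoeff_nuDenom (k n : ℕ) : constantCoeff (nuDenom k n : R⟦X⟧) = 1 := by
  simp [nuDenom, map_prod]

theorem nuDenom_succ (k n : ℕ) :
    (nuDenom k (n + 1) : R⟦X⟧) = (1 + X ^ (2 * k + 1)) * nuDenom (k + 1) n := by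
  rw [nuDenom, prod_range_succ', nuDenom, mul_comm]
  congr 1
  · simp
  · exact prod_congr rfl fun j _ ↦ by ring_nf

theorem one_add_X_pow_mul_nuTerm_zero (k : ℕ) :
    (1 + X ^ (2 * k + 1)) * (nuTerm k 0 : R⟦X⟧) = 1 := by
  have h : (nuDenom k 0 : R⟦X⟧) = 1 + X ^ (2 * k + 1) := by simp [nuDenom]
  rw [nuTerm, ← h]
  simpa using mul_invOfUnit _ (1 : Rˣ) (by simpa using constantCoeff_nuDenom k 0)

theorem one_add_X_pow_mul_nuTerm_succ (k n : ℕ) :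
    (1 + X ^ (2 * k + 1)) * (nuTerm k (n + 1) : R⟦X⟧) = X ^ (2 * k + 2) * nuTerm (k + 1) n := by
  rw [nuTerm, nuTerm, nuDenom_succ, mul_left_comm,
    mul_invOfUnit_mul_left (constantCoeff_one_add_X_pow (by omega)) (constantCoeff_nuDenom _ _),
    ← mul_assoc, ← pow_add]
  ring_nf

theorem X_pow_dvd_nuTerm (k n : ℕ) : X ^ n ∣ (nuTerm k n : R⟦X⟧) :=
  (pow_dvd_pow X (by nlinarith : n ≤ n * n + (2 * k + 1) * n)).mul_right _

open WithPiTopology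

variable [TopologicalSpace R] [IsTopologicalRing R] [T2Space R]

def nuTail (k : ℕ) : R⟦X⟧ := ∑' n, nuTerm k n

theorem isNuRecursion_nuTail : IsNuRecursion (nuTail : ℕ → R⟦X⟧) := by
  intro k
  have hsum (k : ℕ) : Summable (nuTerm k : ℕ → R⟦X⟧) :=
    summable_of_forall_X_pow_dvd (X_pow_dvd_nuTerm k)
  set f : ℕ → R⟦X⟧ := fun n ↦ (1 + X ^ (2 * k + 1)) * nuTerm k n
  have hshift : Summable fun n ↦ f (n + 1) := ((summable_nat_add_iff 1).mpr (hsum k)).mul_left _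
  unfold nuTail
  rw [← Summable.tsum_mul_left _ (hsum k), ← Summable.tsum_mul_left _ (hsum (k + 1)),
    tsum_eq_zero_add' hshift]
  simp only [f, one_add_X_pow_mul_nuTerm_zero, one_add_X_pow_mul_nuTerm_succ]

end NuTail

def partialTheta [Semiring R] (c : ℕ) : R⟦X⟧ :=
  mk fun N ↦ if ∃ m, N = 3 * m * m + c * m then 1 else 0

theorem partialTheta_eq [Semiring R] (c : ℕ) :
    (partialTheta c : R⟦X⟧) = 1 + X ^ (c + 3) * partialTheta (c + 6) := by
  ext N
  simp only [partialTheta, coeff_mk, map_add, coeff_one, coeff_X_pow_mul',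
    Nat.exists_eq_three_mul_mul_add_mul_iff c N]
  by_cases hN : N = 0
  · simp [hN]
  · simp [hN, ite_and]

theorem coeff_partialTheta_two_add_X_mul [Semiring R] (N : ℕ) :
    coeff N (partialTheta 2 + X * partialTheta 4 : R⟦X⟧) =
      if IsSquare (3 * N + 1) then 1 else 0 := by
  simp only [Nat.isSquare_three_mul_add_one_iff]
  rcases N with _ | n
  · simp [partialTheta]
  · have hex := Nat.not_exists_three_mul_mul_add_two_mul_and (n + 1)
    simp only [map_add, coeff_succ_X_mul, partialTheta, coeff_mk, Nat.add_right_cancel_iff] at hex ⊢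
    split_ifs <;> simp_all

section NuTailModTwo

variable [CommRing R]

def oddProd (n : ℕ) : R⟦X⟧ := ∏ j ∈ range n, (1 + X ^ (2 * j + 1))

theorem oddProd_succ (n : ℕ) :
    (oddProd (n + 1) : R⟦X⟧) = (1 + X ^ (2 * n + 1)) * oddProd n := by
  rw [oddProd, prod_range_succ, oddProd, mul_comm]

def nuHead (k : ℕ) : R⟦X⟧ := ∑ n ∈ range k, (X ^ (2 * k + 1)) ^ n * oddProd n

theorem one_add_X_pow_mul_nuHead_succ (k : ℕ) :
    1 + X ^ (2 * k + 2) * (nuHead (k + 1) : R⟦X⟧) =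
      (1 - X ^ (2 * k + 1)) * (nuHead k + (X ^ (2 * k + 1)) ^ k * oddProd k) +
        (X ^ (2 * k + 1)) ^ (k + 1) * oddProd (k + 1) := by
  set F : ℕ → R⟦X⟧ := fun n ↦ (X ^ (2 * k + 1)) ^ n * oddProd n
  have hterm (n : ℕ) : X ^ (2 * k + 2) * ((X ^ (2 * (k + 1) + 1)) ^ n * oddProd n) =
      F (n + 1) - X ^ (2 * k + 1) * F n := by
    simp only [F, oddProd_succ]
    ring
  have hsum : X ^ (2 * k + 2) * (nuHead (k + 1) : R⟦X⟧) =
      ∑ n ∈ range (k + 1), F (n + 1) - X ^ (2 * k + 1) * ∑ n ∈ range (k + 1), F n := by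
    rw [nuHead, mul_sum, mul_sum, ← sum_sub_distrib]
    exact sum_congr rfl fun n _ ↦ hterm n
  have hhead : (nuHead k : R⟦X⟧) = ∑ n ∈ range k, F n := rfl
  rw [hsum, hhead, ← add_sub_cancel_right (∑ n ∈ range (k + 1), F (n + 1)) (F 0),
    ← sum_range_succ', sum_range_succ, sum_range_succ]
  simp only [F, oddProd, range_zero, prod_empty]
  ring

def nuTailModTwo (k : ℕ) : R⟦X⟧ :=
  nuHead k + (X ^ (2 * k + 1)) ^ k * oddProd k *
    (partialTheta (6 * k + 2) + X ^ (2 * k + 1) * partialTheta (6 * k + 4))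

theorem isNuRecursion_nuTailModTwo [CharP R 2] :
    IsNuRecursion (nuTailModTwo : ℕ → R⟦X⟧) := by
  intro k
  have htwo : (2 : R⟦X⟧) = 0 := by
    rw [← map_ofNat C 2, CharTwo.two_eq_zero, map_zero]
  have hhead := one_add_X_pow_mul_nuHead_succ (R := R) k
  rw [oddProd_succ] at hhead
  simp only [nuTailModTwo]
  rw [show 6 * (k + 1) + 2 = 6 * k + 2 + 6 by ring, show 6 * (k + 1) + 4 = 6 * k + 4 + 6 by ring,
    partialTheta_eq (6 * k + 2), partialTheta_eq (6 * k + 4), oddProd_succ]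
  linear_combination -hhead
    + (X ^ (2 * k + 1) * nuHead k + (X ^ (2 * k + 1)) ^ (k + 1) * oddProd k) * htwo

theorem nuTailModTwo_zero :
    (nuTailModTwo 0 : R⟦X⟧) = partialTheta 2 + X * partialTheta 4 := by
  simp [nuTailModTwo, nuHead, oddProd]

end NuTailModTwo

end PowerSeries

open PowerSeries.WithPiTopology in
theorem psSum_eq_tsum {f : ℕ → ℤ⟦X⟧} (hf : Summable f) : psSum f = ∑' n, f n := by
  ext d
  rw [psSum, coeff_mk]
  exact ((hasSum_iff_hasSum_coeff ℤ).mp hf.hasSum d).tsum_eq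

theorem mockNu3_eq_nuTail : mockNu3 = nuTail 0 := by
  have hterm (n : ℕ) :
      psDiv (X ^ (n * (n + 1))) (qPoch (-X) (X ^ 2) (n + 1)) = nuTerm 0 n := by
    rw [psDiv, nuTerm, qPoch, nuDenom]
    congr 2
    · ring
    · exact prod_congr rfl fun j _ ↦ by ring
  simp only [mockNu3, hterm]
  exact psSum_eq_tsum (summable_of_forall_X_pow_dvd (X_pow_dvd_nuTerm 0))

theorem odd_coeff_mockNu3_iff (n : ℕ) : Odd (coeff n mockNu3) ↔ IsSquare (3 * n + 1) := by
  have hmod : map (Int.castRingHom (ZMod 2)) mockNu3 = partialTheta 2 + X * partialTheta 4 := by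
    rw [mockNu3_eq_nuTail, ← nuTailModTwo_zero]
    exact (isNuRecursion_nuTail.map _).head_eq isNuRecursion_nuTailModTwo
  rw [← ZMod.intCast_eq_one_iff_odd, ← eq_intCast (Int.castRingHom (ZMod 2)), ← coeff_map, hmod,
    coeff_partialTheta_two_add_X_mul]
  split_ifs with h <;> simp [h]

theorem Nat.card_filter_isSquare_three_mul_add_one (N : ℕ) :
    #{n ∈ range (N + 1) | IsSquare (3 * n + 1)} = sqrt (3 * N + 1) - sqrt (3 * N + 1) / 3 := by
  set K := sqrt (3 * N + 1)
  have hbij : #{n ∈ range (N + 1) | IsSquare (3 * n + 1)} = #{m ∈ Ioc 0 K | ¬ 3 ∣ m} := by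
    refine card_nbij' (fun n ↦ sqrt (3 * n + 1)) (fun m ↦ m * m / 3) ?_ ?_ ?_ ?_
    · intro n hn
      simp only [mem_coe, mem_filter, mem_range] at hn
      obtain ⟨hnN, r, hr⟩ := hn
      simp only [mem_coe, mem_filter, mem_Ioc, hr, sqrt_eq]
      refine ⟨⟨Nat.pos_of_ne_zero fun h ↦ by simp [h] at hr, ?_⟩, fun h3 ↦ ?_⟩
      · rw [← sqrt_eq r, ← hr]
        exact sqrt_le_sqrt (by omega)
      · have := h3.mul_right r
        omega
    · intro m hm
      simp only [mem_coe, mem_filter, mem_Ioc] at hm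
      obtain ⟨⟨-, hmK⟩, h3⟩ := hm
      have hmod := mul_self_mod_three_eq_one h3
      have hmm : m * m ≤ 3 * N + 1 := (Nat.mul_self_le_mul_self hmK).trans (sqrt_le _)
      simp only [mem_coe, mem_filter, mem_range]
      exact ⟨by omega, m, by omega⟩
    · intro n hn
      simp only [mem_coe, mem_filter, mem_range] at hn
      obtain ⟨-, r, hr⟩ := hn
      simp only [hr, sqrt_eq]
      omega
    · intro m hm
      simp only [mem_coe, mem_filter, mem_Ioc] at hm
      have hmod := mul_self_mod_three_eq_one hm.2
      show sqrt (3 * (m * m / 3) + 1) = m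
      rw [show 3 * (m * m / 3) + 1 = m * m by omega, sqrt_eq]
  rw [hbij, filter_not, card_sdiff_of_subset (filter_subset _ _), Nat.Ioc_filter_dvd_card_eq_div,
    Nat.card_Ioc, Nat.sub_zero]

/-- `c(ν⁽³⁾;n)` is odd iff `3n + 1 = k²` for some integer `k`; moreover
`#{0 ≤ n ≤ N : c(ν⁽³⁾;n) odd} = ⌊√(3N+1)⌋ − ⌊√(3N+1)/3⌋`. -/
theorem mockNu3_parity :
    (∀ n : ℕ, Odd (PowerSeries.coeff n mockNu3) ↔ ∃ k : ℤ, (3 * n + 1 : ℤ) = k ^ 2) ∧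
    (∀ N : ℕ, ((Finset.range (N + 1)).filter
        (fun n => Odd (PowerSeries.coeff n mockNu3))).card =
      ⌊Real.sqrt (3 * N + 1)⌋₊ - ⌊Real.sqrt (3 * N + 1) / 3⌋₊) := by
  refine ⟨fun n ↦ ?_, fun N ↦ ?_⟩
  · rw [odd_coeff_mockNu3_iff, ← Int.isSquare_natCast_iff]
    push_cast
    simp only [IsSquare, sq]
  · have hsqrt : ⌊Real.sqrt (3 * N + 1)⌋₊ = Nat.sqrt (3 * N + 1) := by
      exact_mod_cast Real.nat_floor_real_sqrt_eq_nat_sqrt (a := 3 * N + 1)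
    rw [filter_congr fun n _ ↦ odd_coeff_mockNu3_iff n, Nat.card_filter_isSquare_three_mul_add_one,
      Nat.floor_div_ofNat, hsqrt]
end
end
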